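/- arXiv:1310.7137 — 2 statements merged into one kernel-verified Lean document; each statement's English description precedes it below -/
import Mathlib

section
/- Let (A, Σ, δ) be a reversible finite automaton with alphabet of at least two elements that contains a cycle with exit. Then there exists a family ρ = (ρ_x)_{x∈A} of permutations of Σ such that the group generated by the invertible Mealy automaton (A, Σ, δ, ρ) is infinite. -/
/-- Extended production function of a Mealy automaton: `mealyMap δ ρ x` is the
action of the state `x` on finite words over the alphabet. -/
def mealyMap {A S : Type*} (δ : S → A → A) (ρ : A → S → S) : A → List S → List S
  | _, [] => []
  | x, i :: s => ρ x i :: mealyMap δ ρ (δ i x) s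

/-- The semigroup generated by a Mealy automaton: the subsemigroup of maps
`Σ* → Σ*` (under composition) generated by the production functions. -/
def mealySemigroup {A S : Type*} (δ : S → A → A) (ρ : A → S → S) :
    Subsemigroup (Function.End (List S)) :=
  Subsemigroup.closure (Set.range fun x => (mealyMap δ ρ x : Function.End (List S)))

/-- The group generated by an invertible Mealy automaton: the subgroup of
permutations of `Σ*` generated by the production functions. -/
def mealyGroup {A S : Type*} (δ : S → A → A) (ρ : A → S → S) :
    Subgroup (Equiv.Perm (List S)) :=
  Subgroup.closure {f : Equiv.Perm (List S) | ∃ x : A, ⇑f = mealyMap δ ρ x}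

/-- A cycle in the automaton `(A, Σ, δ)`: pairwise distinct states
`states 0, …, states (n-1)` with transitions `states k —labels k→ states (k+1 mod n)`. -/
structure MealyCycle {A S : Type*} (δ : S → A → A) where
  n : ℕ
  npos : 0 < n
  states : Fin n → A
  labels : Fin n → S
  inj : Function.Injective states
  step : ∀ k : Fin n, δ (labels k) (states k) = states ⟨(k + 1) % n, Nat.mod_lt _ npos⟩

/-- The cycle has an external exit. -/
def HasExternalExit {A S : Type*} {δ : S → A → A} (C : MealyCycle δ) : Prop :=
  ∃ (k : Fin C.n) (i : S), δ i (C.states k) ∉ Set.range C.states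

/-- The cycle has an internal exit. -/
def HasInternalExit {A S : Type*} {δ : S → A → A} (C : MealyCycle δ) : Prop :=
  ∃ (k : Fin C.n) (i : S), δ i (C.states k) ∈ Set.range C.states ∧
    δ i (C.states k) ≠ δ (C.labels k) (C.states k)

/-- `v` is reachable from `u` in the automaton `(A, Σ, δ)`. -/
def Reachable {A S : Type*} (δ : S → A → A) (u v : A) : Prop :=
  ∃ s : List S, s.foldl (fun a i => δ i a) u = v

/-- Action of a word `s ∈ Σ*` on states of powers of the automaton (words over `A`),
via the production functions of the dual automaton: `dualAct δ ρ s = δ_s`. -/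
def dualAct {A S : Type*} (δ : S → A → A) (ρ : A → S → S) (s : List S) (u : List A) : List A :=
  s.foldl (fun w i => mealyMap ρ δ i w) u

/-- Two states of a power of a reversible Mealy automaton lie in the same
connected component iff some `δ_s` maps one to the other. -/
def sameComp {A S : Type*} (δ : S → A → A) (ρ : A → S → S) (u w : List A) : Prop :=
  ∃ s : List S, dualAct δ ρ s u = w


/-! Choose a state `y` and letters `c₀ ≠ c₁` with `δ c₀ y ≠ δ c₁ y` (an exit of the cycle
provides them), and let `y` swap `c₀, c₁` while every other state acts trivially. The group then
acts on the binary subtree `{c₀, c₁}*`. Reversibility yields, for every `L`, a binary word `u` of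
length `L` and a state `x` whose run along `u` visits `y` only at its end, so `x` acts by fixing
`u` and swapping its two children. Conjugating such elements shows that the group is transitive on
every level of the binary subtree, so it has at least `2 ^ L` elements for every `L`. -/

open Equiv
open scoped Pointwise

section

variable {A S : Type*}

def stateAfter (δ : S → A → A) (x : A) (s : List S) : A := s.foldl (fun a i => δ i a) x

@[simp] theorem stateAfter_nil (δ : S → A → A) (x : A) : stateAfter δ x [] = x := rfl

@[simp] theorem stateAfter_cons (δ : S → A → A) (x : A) (i : S) (s : List S) :
    stateAfter δ x (i :: s) = stateAfter δ (δ i x) s := rfl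

theorem mealyMap_append (δ : S → A → A) (ρ : A → S → S) (x : A) (s t : List S) :
    mealyMap δ ρ x (s ++ t) = mealyMap δ ρ x s ++ mealyMap δ ρ (stateAfter δ x s) t := by
  induction s generalizing x with
  | nil => rfl
  | cons i s ih => simp [mealyMap, ih]

theorem mealyMap_append_singleton (δ : S → A → A) (ρ : A → S → S) (x : A) (s : List S) (c : S) :
    mealyMap δ ρ x (s ++ [c]) = mealyMap δ ρ x s ++ [ρ (stateAfter δ x s) c] :=
  mealyMap_append δ ρ x s [c]

section Invertible

variable (δ : S → A → A) (ρ : A → Perm S)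

def invMealyMap : A → List S → List S :=
  mealyMap (fun j x => δ ((ρ x).symm j) x) (fun x => (ρ x).symm)

theorem invMealyMap_mealyMap (x : A) (s : List S) :
    invMealyMap δ ρ x (mealyMap δ (fun a => ρ a) x s) = s := by
  induction s generalizing x with
  | nil => rfl
  | cons i s ih =>
    simp only [invMealyMap] at ih ⊢
    simp [mealyMap, ih]

theorem mealyMap_invMealyMap (x : A) (s : List S) :
    mealyMap δ (fun a => ρ a) x (invMealyMap δ ρ x s) = s := by
  induction s generalizing x with
  | nil => rfl
  | cons i s ih =>
    simp only [invMealyMap] at ih ⊢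
    simp [mealyMap, ih]

def mealyPerm (x : A) : Perm (List S) :=
  ⟨mealyMap δ (fun a => ρ a) x, invMealyMap δ ρ x,
    invMealyMap_mealyMap δ ρ x, mealyMap_invMealyMap δ ρ x⟩

theorem mealyPerm_mem_mealyGroup (x : A) : mealyPerm δ ρ x ∈ mealyGroup δ (fun a => ρ a) :=
  Subgroup.subset_closure ⟨x, rfl⟩

theorem coe_inv_eq_invMealyMap {f : Perm (List S)} {x : A}
    (hf : ⇑f = mealyMap δ (fun a => ρ a) x) : ⇑f⁻¹ = invMealyMap δ ρ x := by
  ext1 s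
  conv_lhs => rw [← invMealyMap_mealyMap δ ρ x (f⁻¹ s), ← hf]
  simp

end Invertible

structure IsTreeMap (T : Set S) (f : List S → List S) : Prop where
  append_singleton : ∀ s c, ∃ c', f (s ++ [c]) = f s ++ [c']
  mapsTo_words : ∀ s, (∀ a ∈ s, a ∈ T) → ∀ a ∈ f s, a ∈ T

namespace IsTreeMap

variable {T : Set S} {f g : List S → List S}

theorem id : IsTreeMap T id :=
  ⟨fun _ c => ⟨c, rfl⟩, fun _ hs => hs⟩

theorem comp (hf : IsTreeMap T f) (hg : IsTreeMap T g) : IsTreeMap T (f ∘ g) where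
  append_singleton s c := by
    obtain ⟨c', hc'⟩ := hg.append_singleton s c
    obtain ⟨c'', hc''⟩ := hf.append_singleton (g s) c'
    exact ⟨c'', by simp only [Function.comp_apply, hc', hc'']⟩
  mapsTo_words s hs := hf.mapsTo_words _ (hg.mapsTo_words s hs)

theorem exists_append_singleton_mem (hf : IsTreeMap T f) {s : List S} {c : S}
    (hs : ∀ a ∈ s, a ∈ T) (hc : c ∈ T) : ∃ c' ∈ T, f (s ++ [c]) = f s ++ [c'] := by
  obtain ⟨c', hc'⟩ := hf.append_singleton s c
  have hT := hf.mapsTo_words (s ++ [c]) (by simpa [or_imp, forall_and] using ⟨hs, hc⟩)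
  exact ⟨c', hT c' (by simp [hc']), hc'⟩

end IsTreeMap

theorem isTreeMap_mealyMap {T : Set S} (δ : S → A → A) (ρ : A → S → S)
    (hρ : ∀ x, Set.MapsTo (ρ x) T T) (x : A) : IsTreeMap T (mealyMap δ ρ x) where
  append_singleton s c := ⟨_, mealyMap_append_singleton δ ρ x s c⟩
  mapsTo_words s hs := by
    induction s generalizing x with
    | nil => simp [mealyMap]
    | cons i s ih =>
      simp only [List.mem_cons, forall_eq_or_imp, mealyMap] at hs ⊢
      exact ⟨hρ x hs.1, ih _ hs.2⟩

theorem Set.mapsTo_of_mem_stabilizer {T : Set S} {σ : Perm S}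
    (hσ : σ ∈ MulAction.stabilizer (Perm S) T) : Set.MapsTo σ T T := fun a ha => by
  rw [← MulAction.mem_stabilizer_iff.mp hσ]
  exact Set.smul_mem_smul_set ha

theorem isTreeMap_of_mem_mealyGroup {T : Set S} (δ : S → A → A) {ρ : A → Perm S}
    (hρ : ∀ x, ρ x ∈ MulAction.stabilizer (Perm S) T) {g : Perm (List S)}
    (hg : g ∈ mealyGroup δ (fun a => ρ a)) : IsTreeMap T g := by
  induction hg using Subgroup.closure_induction'' with
  | mem f hf =>
    obtain ⟨x, hx⟩ := hf
    exact hx ▸ isTreeMap_mealyMap δ _ (fun x => Set.mapsTo_of_mem_stabilizer (hρ x)) x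
  | inv_mem f hf =>
    obtain ⟨x, hx⟩ := hf
    rw [coe_inv_eq_invMealyMap δ ρ hx]
    exact isTreeMap_mealyMap _ _ (fun x => Set.mapsTo_of_mem_stabilizer (inv_mem (hρ x))) x
  | one => exact IsTreeMap.id
  | mul f g _ _ hf hg => exact hf.comp hg

section LevelTransitive

variable {G : Subgroup (Perm (List S))} {T : Set S}

def TransitiveOnChildren (G : Subgroup (Perm (List S))) (T : Set S) (u : List S) : Prop :=
  ∀ d ∈ T, ∀ d' ∈ T, ∃ g ∈ G, g (u ++ [d]) = u ++ [d']

theorem TransitiveOnChildren.of_apply_eq (hG : ∀ g ∈ G, IsTreeMap T g) {u v : List S}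
    (hu : TransitiveOnChildren G T u) {k : Perm (List S)} (hk : k ∈ G) (hkv : k v = u)
    (hv : ∀ a ∈ v, a ∈ T) : TransitiveOnChildren G T v := by
  intro d hd d' hd'
  obtain ⟨e, he, hke⟩ := (hG k hk).exists_append_singleton_mem hv hd
  obtain ⟨e', he', hke'⟩ := (hG k hk).exists_append_singleton_mem hv hd'
  obtain ⟨g, hg, hge⟩ := hu e he e' he'
  refine ⟨k⁻¹ * g * k, mul_mem (mul_mem (inv_mem hk) hg) hk, ?_⟩
  rw [← hkv] at hge
  rw [Perm.mul_apply, Perm.mul_apply, hke, hge]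
  exact Perm.inv_eq_iff_eq.mpr hke'.symm

theorem exists_mem_apply_replicate_eq (hG : ∀ g ∈ G, IsTreeMap T g) {c : S} (hc : c ∈ T)
    (hchildren : ∀ L, ∃ u : List S, u.length = L ∧ (∀ a ∈ u, a ∈ T) ∧ TransitiveOnChildren G T u)
    (w : List S) (hw : ∀ a ∈ w, a ∈ T) : ∃ g ∈ G, g (List.replicate w.length c) = w := by
  suffices ∀ L, ∀ w : List S, w.length = L → (∀ a ∈ w, a ∈ T) →
      ∃ g ∈ G, g (List.replicate L c) = w from this _ w rfl hw
  intro L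
  induction L with
  | zero => exact fun w hL _ => ⟨1, one_mem G, by simp_all⟩
  | succ L ih =>
    intro w hL hw
    obtain ⟨v, b, rfl⟩ := (w.eq_nil_or_concat').resolve_left (by rintro rfl; simp at hL)
    simp only [List.length_append, List.length_singleton, Nat.add_right_cancel_iff] at hL
    simp only [List.mem_append, List.mem_singleton, or_imp, forall_and, forall_eq] at hw
    obtain ⟨f, hf, hfv⟩ := ih v hL hw.1
    obtain ⟨u, huL, huT, hu⟩ := hchildren L
    obtain ⟨k, hk, hku⟩ := ih u huL huT
    have hv : TransitiveOnChildren G T v :=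
      hu.of_apply_eq hG (mul_mem hk (inv_mem hf)) (by simp [← hfv, hku]) hw.1
    obtain ⟨a, ha, hfa⟩ :=
      (hG f hf).exists_append_singleton_mem (s := List.replicate L c) (by simp [hc]) hc
    obtain ⟨h, hh, hha⟩ := hv a ha b hw.2
    refine ⟨h * f, mul_mem hh hf, ?_⟩
    rw [List.replicate_succ', Perm.mul_apply, hfa, hfv, hha]

end LevelTransitive

theorem infinite_of_forall_exists_mem_apply_replicate_eq {G : Subgroup (Perm (List S))}
    {T : Set S} {c₀ c₁ : S} (hc₀ : c₀ ∈ T) (hc₁ : c₁ ∈ T) (hne : c₀ ≠ c₁) (c : S)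
    (htrans : ∀ w : List S, (∀ a ∈ w, a ∈ T) → ∃ g ∈ G, g (List.replicate w.length c) = w) :
    Infinite G := by
  by_contra hfin
  rw [not_infinite_iff_finite] at hfin
  set N := Nat.card G
  let e : Bool → S := fun b => cond b c₁ c₀
  have he : Function.Injective e := by
    intro a b; cases a <;> cases b <;> simp [e, hne, hne.symm]
  have hword : ∀ v : Fin N → Bool, ∃ g ∈ G, g (List.replicate N c) = (List.ofFn v).map e := by
    intro v
    simpa using htrans ((List.ofFn v).map e)
      (by simpa [e] using fun a => by cases v a <;> assumption)
  choose g hgG hg using hword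
  have hinj : Function.Injective fun v => (⟨g v, hgG v⟩ : G) := by
    intro v v' h
    have := hg v
    rw [show g v = g v' from congrArg Subtype.val h, hg v'] at this
    exact List.ofFn_injective (List.map_injective_iff.mpr he this.symm)
  have h2N : 2 ^ N ≤ N := by simpa [Nat.card_fun] using Nat.card_le_card_of_injective _ hinj
  exact (Nat.lt_two_pow_self).not_ge h2N

theorem Pi.mulSingle_apply_mem {G : Type*} [Group G] [DecidableEq A] {H : Subgroup G} (y : A)
    {g : G} (hg : g ∈ H) (x : A) : (Pi.mulSingle y g : A → G) x ∈ H := by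
  rcases eq_or_ne x y with rfl | hx
  · simpa
  · simp [Pi.mulSingle_eq_of_ne hx, one_mem]

theorem Equiv.swap_mem_stabilizer_pair [DecidableEq S] (c₀ c₁ : S) :
    swap c₀ c₁ ∈ MulAction.stabilizer (Perm S) ({c₀, c₁} : Set S) := by
  rw [MulAction.mem_stabilizer_iff, Set.smul_set_insert, Set.smul_set_singleton, Perm.smul_def,
    Perm.smul_def, swap_apply_left, swap_apply_right, Set.pair_comm]

section Swap

variable (δ : S → A → A) {y : A} {c₀ c₁ : S}

/-- The word is built backwards: at most one of the preimages of its current start under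
`δ c₀` and `δ c₁` is `y`, so one of them can be prepended. -/
theorem exists_first_hitting_word (h₀ : Function.Surjective (δ c₀))
    (h₁ : Function.Surjective (δ c₁)) (hy : δ c₀ y ≠ δ c₁ y) (L : ℕ) :
    ∃ (x : A) (u : List S), u.length = L ∧ (∀ a ∈ u, a ∈ ({c₀, c₁} : Set S)) ∧
      stateAfter δ x u = y ∧ ∀ k < L, stateAfter δ x (u.take k) ≠ y := by
  induction L with
  | zero => exact ⟨y, [], rfl, by simp, rfl, by simp⟩
  | succ L ih =>
    obtain ⟨x, u, hL, hu, hxu, hfirst⟩ := ih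
    obtain ⟨c, hc, x', hx', hx'y⟩ : ∃ c ∈ ({c₀, c₁} : Set S), ∃ x', δ c x' = x ∧ x' ≠ y := by
      obtain ⟨x₀, hx₀⟩ := h₀ x
      obtain ⟨x₁, hx₁⟩ := h₁ x
      by_cases h : x₀ = y
      · exact ⟨c₁, by simp, x₁, hx₁, fun h' => hy (by rw [← h, hx₀, ← hx₁, h', h])⟩
      · exact ⟨c₀, by simp, x₀, hx₀, h⟩
    refine ⟨x', c :: u, by simp [hL], List.forall_mem_cons.mpr ⟨hc, hu⟩,
      by simpa [hx'] using hxu, ?_⟩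
    rintro (_ | k) hk
    · simpa using hx'y
    · simpa [hx'] using hfirst k (by omega)

variable {ρ : A → Perm S}

theorem mealyMap_of_forall_ne (hρ : ∀ x ≠ y, ρ x = 1) (x : A) (u : List S)
    (hfirst : ∀ k < u.length, stateAfter δ x (u.take k) ≠ y) :
    mealyMap δ (fun a => ⇑(ρ a)) x u = u := by
  induction u generalizing x with
  | nil => rfl
  | cons i u ih =>
    have hx : x ≠ y := by simpa using hfirst 0 (by simp)
    simp only [mealyMap, hρ x hx, Perm.coe_one, id_eq, List.cons.injEq, true_and]
    exact ih _ fun k hk => by simpa using hfirst (k + 1) (by simpa using hk)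

theorem mealyMap_append_singleton_of_forall_ne (hρ : ∀ x ≠ y, ρ x = 1) (x : A) (u : List S)
    (hfirst : ∀ k < u.length, stateAfter δ x (u.take k) ≠ y) (hxu : stateAfter δ x u = y)
    (d : S) : mealyMap δ (fun a => ⇑(ρ a)) x (u ++ [d]) = u ++ [ρ y d] := by
  rw [mealyMap_append_singleton, mealyMap_of_forall_ne δ hρ x u hfirst, hxu]

variable [DecidableEq S]

theorem transitiveOnChildren_of_eq_swap (hρ : ∀ x ≠ y, ρ x = 1) (hρy : ρ y = swap c₀ c₁)
    (h₀ : Function.Surjective (δ c₀)) (h₁ : Function.Surjective (δ c₁))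
    (hy : δ c₀ y ≠ δ c₁ y) (L : ℕ) :
    ∃ u : List S, u.length = L ∧ (∀ a ∈ u, a ∈ ({c₀, c₁} : Set S)) ∧
      TransitiveOnChildren (mealyGroup δ (fun a => ⇑(ρ a))) {c₀, c₁} u := by
  obtain ⟨x, u, hL, hu, hxu, hfirst⟩ := exists_first_hitting_word δ h₀ h₁ hy L
  have hswap : ∀ d, mealyPerm δ ρ x (u ++ [d]) = u ++ [swap c₀ c₁ d] := fun d => by
    rw [← hρy]; exact mealyMap_append_singleton_of_forall_ne δ hρ x u (hL ▸ hfirst) hxu d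
  have hmem := mealyPerm_mem_mealyGroup δ ρ x
  refine ⟨u, hL, hu, ?_⟩
  rintro d (rfl | rfl) d' (rfl | rfl)
  · exact ⟨1, one_mem _, rfl⟩
  · exact ⟨_, hmem, by rw [hswap, swap_apply_left]⟩
  · exact ⟨_, hmem, by rw [hswap, swap_apply_right]⟩
  · exact ⟨1, one_mem _, rfl⟩

end Swap

theorem HasExternalExit.exists_ne {δ : S → A → A} {C : MealyCycle δ} (h : HasExternalExit C) :
    ∃ y i j, δ i y ≠ δ j y := by
  obtain ⟨k, i, hi⟩ := h
  exact ⟨C.states k, C.labels k, i, fun h => hi (h ▸ C.step k ▸ ⟨_, rfl⟩)⟩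

theorem HasInternalExit.exists_ne {δ : S → A → A} {C : MealyCycle δ} (h : HasInternalExit C) :
    ∃ y i j, δ i y ≠ δ j y := by
  obtain ⟨k, i, -, hi⟩ := h
  exact ⟨C.states k, C.labels k, i, Ne.symm hi⟩

end

theorem reversible_cycle_with_exit_infinite_group_general
    {A S : Type*} (δ : S → A → A)
    (hrev : ∀ i : S, Function.Bijective (δ i))
    (C : MealyCycle δ) (hC : HasExternalExit C ∨ HasInternalExit C) :
    ∃ ρ : A → Equiv.Perm S, Infinite ↥(mealyGroup δ (fun a => ⇑(ρ a))) := by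
  classical
  obtain ⟨y, c₀, c₁, hy⟩ := hC.elim HasExternalExit.exists_ne HasInternalExit.exists_ne
  have hne : c₀ ≠ c₁ := fun h => hy (h ▸ rfl)
  let ρ : A → Perm S := Pi.mulSingle y (swap c₀ c₁)
  refine ⟨ρ, ?_⟩
  have hρ : ∀ x ≠ y, ρ x = 1 := fun x hx => Pi.mulSingle_eq_of_ne hx _
  have hG := fun g (hg : g ∈ mealyGroup _ _) => isTreeMap_of_mem_mealyGroup δ
    (Pi.mulSingle_apply_mem y (Equiv.swap_mem_stabilizer_pair c₀ c₁)) hg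
  have htrans := exists_mem_apply_replicate_eq hG (c := c₀) (by simp)
    (transitiveOnChildren_of_eq_swap δ hρ (Pi.mulSingle_eq_same _ _) (hrev c₀).2 (hrev c₁).2 hy)
  exact infinite_of_forall_exists_mem_apply_replicate_eq (by simp) (by simp) hne c₀ htrans

/-- Lemma 4: any reversible finite automaton over an alphabet with at
least two letters that has a cycle with exit can be enriched with invertible production
functions so that the generated group is infinite. -/
theorem reversible_cycle_with_exit_infinite_group
    {A S : Type*} [Fintype A] [Fintype S] [Nonempty A]
    (hS : 1 < Fintype.card S) (δ : S → A → A)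
    (hrev : ∀ i : S, Function.Bijective (δ i))
    (C : MealyCycle δ) (hC : HasExternalExit C ∨ HasInternalExit C) :
    ∃ ρ : A → Equiv.Perm S, Infinite ↥(mealyGroup δ (fun a => ⇑(ρ a))) :=
  reversible_cycle_with_exit_infinite_group_general δ hrev C hC
end

section
/- An invertible and reversible Mealy automaton that is not bireversible generates an infinite group. -/
/-!
If `M` is reversible but its inverse is not, two distinct states merge: there are transitions
`x —i|k→ z` and `y —j|k→ z` with `x ≠ y`. Consider the action `u ↦ δ_s(u)` of input words on
state words. Reversibility makes each `δ_s` injective on the finite set `A^m`, so the orbits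
partition `A^m`. Since `δ_i(x w)` and `δ_j(y w)` are equal, `x w` and `y w` lie in one orbit,
which the map `v ↦ v.tail` sends onto the orbit of `w`. The orbit of `x^m` therefore has more
than `m` elements. On the other hand `δ_s` is determined by the transition maps
`δ_{g(s)} : A → A` for `g` in the group, so a finite group leaves only finitely many maps `δ_s`,
which bounds the orbit sizes.
-/

open Function Set

theorem Function.FactorsThrough.finite_range {α β γ : Type*} {g : α → γ} {f : α → β}
    (hg : g.FactorsThrough f) (hf : (range f).Finite) : (range g).Finite := by
  rcases isEmpty_or_nonempty α with hα | ⟨⟨a⟩⟩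
  · rw [range_eq_empty g]
    exact finite_empty
  · rw [← hg.extend_comp fun _ => g a, range_comp]
    exact hf.image _

theorem Set.ncard_image_lt_of_not_injOn {α β : Type*} {f : α → β} {s : Set α}
    (hs : s.Finite) (hf : ¬ InjOn f s) : (f '' s).ncard < s.ncard :=
  (ncard_image_le hs).lt_of_ne fun h => hf (injOn_of_ncard_image_eq h hs)

section Mealy

variable {A S : Type*} (δ : S → A → A) (ρ : A → S → S)

theorem mealyMap_length (x : A) (s : List S) : (mealyMap δ ρ x s).length = s.length := by
  induction s generalizing x with
  | nil => rfl
  | cons i s ih => simp [mealyMap, ih]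

theorem mealyMap_injective (hρ : ∀ x, Injective (ρ x)) (x : A) :
    Injective (mealyMap δ ρ x) := by
  intro s t h
  induction s generalizing x t with
  | nil => cases t <;> simp_all [mealyMap]
  | cons i s ih =>
    cases t with
    | nil => simp [mealyMap] at h
    | cons j t =>
      simp only [mealyMap, List.cons.injEq] at h
      obtain rfl := hρ x h.1
      rw [ih _ h.2]

theorem mealyMap_surjective (hρ : ∀ x, Surjective (ρ x)) (x : A) :
    Surjective (mealyMap δ ρ x) := by
  intro t
  induction t generalizing x with
  | nil => exact ⟨[], rfl⟩
  | cons k t ih =>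
    obtain ⟨i, rfl⟩ := hρ x k
    obtain ⟨s, hs⟩ := ih (δ i x)
    exact ⟨i :: s, by rw [mealyMap, hs]⟩

theorem mealyMap_bijective (hρ : ∀ x, Bijective (ρ x)) (x : A) :
    Bijective (mealyMap δ ρ x) :=
  ⟨mealyMap_injective δ ρ (fun x => (hρ x).1) x, mealyMap_surjective δ ρ (fun x => (hρ x).2) x⟩

/-- The transition map `δ_s : A → A` of an input word `s`. -/
def deltaWord (s : List S) (a : A) : A :=
  s.foldl (fun a i => δ i a) a

/-- The action `ρ_u = ρ_{u_n} ∘ ⋯ ∘ ρ_{u_1}` of a state word `u` on input words. -/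
def piWord (u : List A) (s : List S) : List S :=
  u.foldl (fun s a => mealyMap δ ρ a s) s

theorem dualAct_append (s t : List S) (u : List A) :
    dualAct δ ρ (s ++ t) u = dualAct δ ρ t (dualAct δ ρ s u) := by
  simp [dualAct, List.foldl_append]

theorem dualAct_length (s : List S) (u : List A) : (dualAct δ ρ s u).length = u.length := by
  induction s generalizing u with
  | nil => rfl
  | cons i s ih => rw [dualAct, List.foldl_cons, ← dualAct, ih, mealyMap_length]

theorem dualAct_injective (hδ : ∀ i, Injective (δ i)) (s : List S) :
    Injective (dualAct δ ρ s) := by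
  induction s with
  | nil => exact injective_id
  | cons i s ih => exact ih.comp (mealyMap_injective ρ δ hδ i)

theorem dualAct_flatten_replicate (n : ℕ) (s : List S) :
    dualAct δ ρ (List.replicate n s).flatten = (dualAct δ ρ s)^[n] := by
  induction n with
  | zero => rfl
  | succ n ih =>
    funext u
    rw [List.replicate_succ, List.flatten_cons, dualAct_append, ih, iterate_succ_apply]

theorem dualAct_state_cons (s : List S) (a : A) (u : List A) :
    dualAct δ ρ s (a :: u) = deltaWord δ s a :: dualAct δ ρ (mealyMap δ ρ a s) u := by
  induction s generalizing a u with
  | nil => rfl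
  | cons i s ih => exact ih (δ i a) (mealyMap ρ δ (ρ a i) u)

theorem dualAct_eq_of_deltaWord_piWord_eq {s t : List S}
    (h : ∀ u, deltaWord δ (piWord δ ρ u s) = deltaWord δ (piWord δ ρ u t)) :
    dualAct δ ρ s = dualAct δ ρ t := by
  funext v
  induction v generalizing s t with
  | nil =>
    exact (List.eq_nil_of_length_eq_zero (dualAct_length δ ρ s [])).trans
      (List.eq_nil_of_length_eq_zero (dualAct_length δ ρ t [])).symm
  | cons a v ih =>
    have hδa : deltaWord δ s a = deltaWord δ t a := congrFun (h []) a
    rw [dualAct_state_cons, dualAct_state_cons, hδa, ih fun u => h (a :: u)]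

theorem exists_mem_mealyGroup_coe_eq_piWord (hρ : ∀ x, Bijective (ρ x)) (u : List A) :
    ∃ g ∈ mealyGroup δ ρ, ⇑g = piWord δ ρ u := by
  induction u with
  | nil => exact ⟨1, one_mem _, rfl⟩
  | cons a u ih =>
    obtain ⟨g, hg, hgu⟩ := ih
    refine ⟨g * Equiv.ofBijective _ (mealyMap_bijective δ ρ hρ a),
      mul_mem hg (Subgroup.subset_closure ⟨a, rfl⟩), ?_⟩
    rw [Equiv.Perm.coe_mul, hgu]
    rfl

theorem finite_range_piWord [Finite (mealyGroup δ ρ)] (hρ : ∀ x, Bijective (ρ x)) :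
    (range (piWord δ ρ)).Finite := by
  refine ((mealyGroup δ ρ : Set (Equiv.Perm (List S))).toFinite.image (⇑)).subset ?_
  rintro _ ⟨u, rfl⟩
  exact exists_mem_mealyGroup_coe_eq_piWord δ ρ hρ u

theorem finite_range_dualAct [Finite A] (hfin : (range (piWord δ ρ)).Finite) :
    (range (dualAct δ ρ)).Finite := by
  have := hfin.to_subtype
  have hfactor : (dualAct δ ρ).FactorsThrough
      fun s (g : range (piWord δ ρ)) => deltaWord δ (g.1 s) := fun s t h =>
    dualAct_eq_of_deltaWord_piWord_eq δ ρ fun u => congrFun h ⟨piWord δ ρ u, u, rfl⟩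
  exact hfactor.finite_range (toFinite _)

def dualOrbit (u : List A) : Set (List A) :=
  range fun s => dualAct δ ρ s u

theorem mem_dualOrbit_self (u : List A) : u ∈ dualOrbit δ ρ u :=
  ⟨[], rfl⟩

theorem dualOrbit_subset_of_mem {u v : List A} (h : v ∈ dualOrbit δ ρ u) :
    dualOrbit δ ρ v ⊆ dualOrbit δ ρ u := by
  obtain ⟨s, rfl⟩ := h
  rintro _ ⟨t, rfl⟩
  exact ⟨s ++ t, dualAct_append δ ρ s t u⟩

theorem dualOrbit_finite [Finite A] (u : List A) : (dualOrbit δ ρ u).Finite :=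
  (List.finite_length_eq A u.length).subset <| range_subset_iff.2 fun s => dualAct_length δ ρ s u

theorem ncard_dualOrbit_le (hfin : (range (dualAct δ ρ)).Finite) (u : List A) :
    (dualOrbit δ ρ u).ncard ≤ (range (dualAct δ ρ)).ncard := by
  rw [dualOrbit, ← comp_def (fun f : List A → List A => f u), range_comp]
  exact ncard_image_le hfin

theorem mem_dualOrbit_symm [Finite A] (hδ : ∀ i, Injective (δ i)) {u v : List A}
    (h : v ∈ dualOrbit δ ρ u) : u ∈ dualOrbit δ ρ v := by
  obtain ⟨s, rfl⟩ := h
  -- `δ_s` permutes the finite set of words of length `|u|`, so `u` is a periodic point.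
  have hmaps : MapsTo (dualAct δ ρ s) {l | l.length = u.length} {l | l.length = u.length} :=
    fun l hl => (dualAct_length δ ρ s l).trans hl
  have := (List.finite_length_eq A u.length).to_subtype
  obtain ⟨n, hn, hper⟩ := mem_periodicPts.1 <|
    (hmaps.restrict_inj.2 (dualAct_injective δ ρ hδ s).injOn).mem_periodicPts ⟨u, rfl⟩
  have hu : (dualAct δ ρ s)^[n] u = u := by
    simpa [hmaps.iterate_restrict, IsPeriodicPt, IsFixedPt, Subtype.ext_iff] using hper
  refine ⟨(List.replicate (n - 1) s).flatten, ?_⟩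
  show dualAct δ ρ _ (dualAct δ ρ s u) = u
  rw [dualAct_flatten_replicate, ← iterate_succ_apply, Nat.succ_eq_add_one, Nat.sub_one_add_one hn.ne', hu]

section Merging

variable [Finite A] (hδ : ∀ i, Injective (δ i)) (hρ : ∀ x, Surjective (ρ x))
  {x y : A} {i j : S} (hxy : x ≠ y) (hρij : ρ x i = ρ y j) (hδij : δ i x = δ j y)
include hδ hρ hxy hρij hδij

theorem ncard_dualOrbit_lt_ncard_dualOrbit_cons (w : List A) :
    (dualOrbit δ ρ w).ncard < (dualOrbit δ ρ (x :: w)).ncard := by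
  have htail : List.tail '' dualOrbit δ ρ (x :: w) = dualOrbit δ ρ w := by
    ext v
    constructor
    · rintro ⟨_, ⟨s, rfl⟩, rfl⟩
      exact ⟨mealyMap δ ρ x s, by simp only [dualAct_state_cons, List.tail_cons]⟩
    · rintro ⟨t, rfl⟩
      obtain ⟨s, rfl⟩ := mealyMap_surjective δ ρ hρ x t
      exact ⟨_, ⟨s, rfl⟩, by simp only [dualAct_state_cons, List.tail_cons]⟩
  have hmeet : dualAct δ ρ [j] (y :: w) = dualAct δ ρ [i] (x :: w) := by
    simp only [dualAct_state_cons]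
    exact congrArg₂ (· :: dualAct δ ρ [·] w) hδij.symm hρij.symm
  have hy : y :: w ∈ dualOrbit δ ρ (x :: w) :=
    dualOrbit_subset_of_mem δ ρ ⟨[i], rfl⟩ (mem_dualOrbit_symm δ ρ hδ ⟨[j], hmeet⟩)
  have hnotinj : ¬ InjOn List.tail (dualOrbit δ ρ (x :: w)) := fun hinj =>
    hxy (List.cons.inj (hinj (mem_dualOrbit_self δ ρ _) hy rfl)).1
  rw [← htail]
  exact ncard_image_lt_of_not_injOn (dualOrbit_finite δ ρ _) hnotinj

theorem lt_ncard_dualOrbit_replicate (m : ℕ) :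
    m < (dualOrbit δ ρ (List.replicate m x)).ncard := by
  induction m with
  | zero => exact (ncard_pos (dualOrbit_finite δ ρ _)).2 ⟨_, mem_dualOrbit_self δ ρ _⟩
  | succ m ih =>
    have := ncard_dualOrbit_lt_ncard_dualOrbit_cons δ ρ hδ hρ hxy hρij hδij
      (List.replicate m x)
    rw [List.replicate_succ]
    omega

theorem infinite_range_dualAct : (range (dualAct δ ρ)).Infinite := fun hfin =>
  (ncard_dualOrbit_le δ ρ hfin _).not_gt <|
    lt_ncard_dualOrbit_replicate δ ρ hδ hρ hxy hρij hδij (range (dualAct δ ρ)).ncard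

end Merging

end Mealy

theorem exists_merging_of_not_bireversible {A S : Type*} [Finite A]
    (δ : S → A → A) (ρ : A → Equiv.Perm S)
    (h : ¬ ((∀ x : A, Bijective fun j : S => (ρ x).symm j) ∧
            (∀ j : S, Bijective fun x : A => δ ((ρ x).symm j) x))) :
    ∃ x y : A, ∃ i j : S, x ≠ y ∧ ρ x i = ρ y j ∧ δ i x = δ j y := by
  have hninj : ¬ ∀ k : S, Injective fun x : A => δ ((ρ x).symm k) x := fun hinj =>
    h ⟨fun x => (ρ x).symm.bijective, fun k => Finite.injective_iff_bijective.1 (hinj k)⟩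
  simp only [Injective, not_forall] at hninj
  obtain ⟨k, x, y, hδxy, hxy⟩ := hninj
  exact ⟨x, y, _, _, hxy, by simp, hδxy⟩

theorem invertible_reversible_not_bireversible_infinite_general
    {A S : Type*} [Fintype A]
    (δ : S → A → A) (ρ : A → Equiv.Perm S)
    (hrev : ∀ i : S, Function.Bijective (δ i))
    (hnotbi : ¬ ((∀ x : A, Function.Bijective fun j : S => (ρ x).symm j) ∧
                 (∀ j : S, Function.Bijective fun x : A => δ ((ρ x).symm j) x))) :
    Infinite ↥(mealyGroup δ (fun a => ⇑(ρ a))) := by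
  obtain ⟨x, y, i, j, hxy, hρij, hδij⟩ := exists_merging_of_not_bireversible δ ρ hnotbi
  refine not_finite_iff_infinite.1 fun hfin => ?_
  exact infinite_range_dualAct δ _ (fun i => (hrev i).1) (fun a => (ρ a).surjective)
    hxy hρij hδij (finite_range_dualAct δ _ (finite_range_piWord δ _ fun a => (ρ a).bijective))

/-- F4: an invertible-reversible Mealy automaton which is not
bireversible generates an infinite group.  Here the inverse automaton has transitions
`x⁻¹ —j|i→ y⁻¹` whenever `x —i|j→ y`, i.e. transition functions
`j ↦ (fun x => δ ((ρ x)⁻¹ j) x)` and production functions `x ↦ (ρ x)⁻¹`; since `M` is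
invertible and reversible, `M` being bireversible amounts to the inverse automaton being
invertible and reversible. -/
theorem invertible_reversible_not_bireversible_infinite
    {A S : Type*} [Fintype A] [Fintype S] [Nonempty A] [Nonempty S]
    (δ : S → A → A) (ρ : A → Equiv.Perm S)
    (hrev : ∀ i : S, Function.Bijective (δ i))
    (hnotbi : ¬ ((∀ x : A, Function.Bijective fun j : S => (ρ x).symm j) ∧
                 (∀ j : S, Function.Bijective fun x : A => δ ((ρ x).symm j) x))) :
    Infinite ↥(mealyGroup δ (fun a => ⇑(ρ a))) :=
  invertible_reversible_not_bireversible_infinite_general δ ρ hrev hnotbi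
end
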